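/- arXiv:2402.06674 — 4 statements merged into one kernel-verified Lean document; each statement's English description precedes it below -/
import Mathlib

section
/- Fix a target example x ∈ ℝ^d with true class mean m_x, shots S ≥ 1 and in-class standard deviation s > 0 with x ≠ 0 and ⟨x, x − m_x⟩ ≠ 0. Model the IN and OUT score distributions of x as Gaussian with common standard deviation σ = s·‖x‖/√S, OUT mean μ = ⟨x, m_x⟩, and IN mean μ + δ where δ = ⟨x, x − m_x⟩/S. For any threshold τ, define TPR and FPR as the probabilities that the IN-score, respectively the OUT-score, falls in the rejection region, taken to be {score ≥ τ} when δ > 0 and {score ≤ τ} when δ < 0. Then TPR = Φ(Φ⁻¹(FPR) + |⟨x, x − m_x⟩|/(√S · s · ‖x‖)). -/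
open MeasureTheory ProbabilityTheory

/-- `Φ`, the CDF of the standard normal distribution. -/
noncomputable def stdGaussianCDF (x : ℝ) : ℝ :=
  (gaussianReal 0 1 (Set.Iic x)).toReal

/-!
Standardizing the scores, `FPR = Φ(±(μ - τ)/σ)` and `TPR = Φ(±(μ + δ - τ)/σ)`, the sign being that
of `δ`; since `Φ` is injective, `Φ⁻¹(FPR) = ±(μ - τ)/σ`, so `TPR = Φ(Φ⁻¹(FPR) + |δ|/σ)`. In the model
`|δ|/σ = |⟨x, x - m_x⟩| / (√S · s · ‖x‖)`.
-/

section

open Set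

lemma gaussianReal_eq_map_affine (μ σ : ℝ) :
    gaussianReal μ (σ ^ 2).toNNReal = (gaussianReal 0 1).map (fun y ↦ σ * y + μ) := by
  rw [show (fun y ↦ σ * y + μ) = (· + μ) ∘ (σ * ·) from rfl,
    ← Measure.map_map (measurable_add_const μ) (measurable_const_mul σ),
    gaussianReal_map_const_mul, gaussianReal_map_add_const, mul_zero, zero_add, mul_one]
  congr
  ext
  simp [sq_nonneg]

lemma gaussianReal_Iic_toReal {σ : ℝ} (hσ : 0 < σ) (μ t : ℝ) :
    (gaussianReal μ (σ ^ 2).toNNReal (Iic t)).toReal = stdGaussianCDF ((t - μ) / σ) := by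
  have hpre : (fun y ↦ σ * y + μ) ⁻¹' Iic t = Iic ((t - μ) / σ) := by
    ext y
    simp only [mem_preimage, mem_Iic, le_div_iff₀ hσ]
    constructor <;> intro <;> linarith
  rw [gaussianReal_eq_map_affine, Measure.map_apply (by fun_prop) measurableSet_Iic, hpre,
    stdGaussianCDF]

-- `N(μ, σ²)` is also the image of `N(0, 1)` under `y ↦ -σ y + μ`, which turns `Ici` into `Iic`.
lemma gaussianReal_Ici_toReal {σ : ℝ} (hσ : 0 < σ) (μ t : ℝ) :
    (gaussianReal μ (σ ^ 2).toNNReal (Ici t)).toReal = stdGaussianCDF ((μ - t) / σ) := by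
  have hpre : (fun y ↦ -σ * y + μ) ⁻¹' Ici t = Iic ((μ - t) / σ) := by
    ext y
    simp only [mem_preimage, mem_Ici, mem_Iic, le_div_iff₀ hσ]
    constructor <;> intro <;> linarith
  rw [← neg_sq, gaussianReal_eq_map_affine, Measure.map_apply (by fun_prop) measurableSet_Ici,
    hpre, stdGaussianCDF]

lemma stdGaussianCDF_strictMono : StrictMono stdGaussianCDF := by
  intro p q hpq
  have hIoc : gaussianReal 0 1 (Ioc p q) ≠ 0 := fun h ↦ by
    simpa [hpq.not_ge] using gaussianReal_absolutelyContinuous' 0 one_ne_zero h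
  rw [stdGaussianCDF, stdGaussianCDF, ← Iic_union_Ioc_eq_Iic hpq.le,
    measure_union (Iic_disjoint_Ioc le_rfl) measurableSet_Ioc,
    ENNReal.toReal_add (measure_ne_top _ _) (measure_ne_top _ _)]
  exact lt_add_of_pos_right _ (ENNReal.toReal_pos hIoc (measure_ne_top _ _))

lemma tpr_eq_stdGaussianCDF_add {μ δ σ τ FPR TPR a : ℝ} (hσ : 0 < σ) (hδ : δ ≠ 0)
    (hpos : 0 < δ →
      FPR = (gaussianReal μ (σ ^ 2).toNNReal (Ici τ)).toReal ∧
      TPR = (gaussianReal (μ + δ) (σ ^ 2).toNNReal (Ici τ)).toReal)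
    (hneg : δ < 0 →
      FPR = (gaussianReal μ (σ ^ 2).toNNReal (Iic τ)).toReal ∧
      TPR = (gaussianReal (μ + δ) (σ ^ 2).toNNReal (Iic τ)).toReal)
    (ha : stdGaussianCDF a = FPR) :
    TPR = stdGaussianCDF (a + |δ| / σ) := by
  rcases hδ.lt_or_gt with hδ | hδ
  · obtain ⟨hFPR, hTPR⟩ := hneg hδ
    rw [gaussianReal_Iic_toReal hσ] at hFPR hTPR
    rw [hTPR, stdGaussianCDF_strictMono.injective (ha.trans hFPR), abs_of_neg hδ]
    ring_nf
  · obtain ⟨hFPR, hTPR⟩ := hpos hδ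
    rw [gaussianReal_Ici_toReal hσ] at hFPR hTPR
    rw [hTPR, stdGaussianCDF_strictMono.injective (ha.trans hFPR), abs_of_pos hδ]
    ring_nf

end

theorem stmt_6_general {d : ℕ} (x mx : Fin d → ℝ) (S : ℕ) (hS : 1 ≤ S) (s : ℝ) (hs : 0 < s)
    (hx : x ≠ 0) (hip : (∑ j, x j * (x j - mx j)) ≠ 0)
    (μ δ σ : ℝ)
    (hδ : δ = (∑ j, x j * (x j - mx j)) / S)
    (hσ : σ = s * Real.sqrt (∑ j, x j ^ 2) / Real.sqrt S)
    (τ FPR TPR : ℝ)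
    (hpos : 0 < δ →
      FPR = (gaussianReal μ (Real.toNNReal (σ ^ 2)) (Set.Ici τ)).toReal ∧
      TPR = (gaussianReal (μ + δ) (Real.toNNReal (σ ^ 2)) (Set.Ici τ)).toReal)
    (hneg : δ < 0 →
      FPR = (gaussianReal μ (Real.toNNReal (σ ^ 2)) (Set.Iic τ)).toReal ∧
      TPR = (gaussianReal (μ + δ) (Real.toNNReal (σ ^ 2)) (Set.Iic τ)).toReal)
    (a : ℝ) (ha : stdGaussianCDF a = FPR) :
    TPR = stdGaussianCDF (a +
      |∑ j, x j * (x j - mx j)| / (Real.sqrt S * s * Real.sqrt (∑ j, x j ^ 2))) := by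
  have hSpos : (0 : ℝ) < S := by exact_mod_cast hS
  have hnormSq : 0 < ∑ j, x j ^ 2 := by
    obtain ⟨j, hj⟩ := Function.ne_iff.mp hx
    exact Finset.sum_pos' (fun i _ ↦ sq_nonneg _) ⟨j, Finset.mem_univ j, sq_pos_of_ne_zero hj⟩
  have hσpos : 0 < σ := by rw [hσ]; positivity
  have hδne : δ ≠ 0 := by rw [hδ]; exact div_ne_zero hip hSpos.ne'
  have hshift : |δ| / σ =
      |∑ j, x j * (x j - mx j)| / (Real.sqrt S * s * Real.sqrt (∑ j, x j ^ 2)) := by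
    have hsqrtS := Real.mul_self_sqrt hSpos.le
    rw [hδ, hσ, abs_div, abs_of_pos hSpos]
    field_simp
    linear_combination hsqrtS
  rw [← hshift]
  exact tpr_eq_stdGaussianCDF_add hσpos hδne hpos hneg ha

/-- First part of Theorem 1 (per-example LiRA power-law): with IN/OUT scores Gaussian with
common standard deviation `σ = s·‖x‖/√S`, OUT mean `μ = ⟨x, m_x⟩`, IN mean `μ + δ` with
`δ = ⟨x, x − m_x⟩/S`, rejection region `{score ≥ τ}` if `δ > 0` and `{score ≤ τ}` if `δ < 0`,
we get `TPR = Φ(Φ⁻¹(FPR) + |⟨x, x − m_x⟩|/(√S·s·‖x‖))`, where `a` plays the role of `Φ⁻¹(FPR)`. -/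
theorem stmt_6 {d : ℕ} (x mx : Fin d → ℝ) (S : ℕ) (hS : 1 ≤ S) (s : ℝ) (hs : 0 < s)
    (hx : x ≠ 0) (hip : (∑ j, x j * (x j - mx j)) ≠ 0)
    (μ δ σ : ℝ)
    (hμ : μ = ∑ j, x j * mx j)
    (hδ : δ = (∑ j, x j * (x j - mx j)) / S)
    (hσ : σ = s * Real.sqrt (∑ j, x j ^ 2) / Real.sqrt S)
    (τ FPR TPR : ℝ)
    (hpos : 0 < δ →
      FPR = (gaussianReal μ (Real.toNNReal (σ ^ 2)) (Set.Ici τ)).toReal ∧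
      TPR = (gaussianReal (μ + δ) (Real.toNNReal (σ ^ 2)) (Set.Ici τ)).toReal)
    (hneg : δ < 0 →
      FPR = (gaussianReal μ (Real.toNNReal (σ ^ 2)) (Set.Iic τ)).toReal ∧
      TPR = (gaussianReal (μ + δ) (Real.toNNReal (σ ^ 2)) (Set.Iic τ)).toReal)
    (a : ℝ) (ha : stdGaussianCDF a = FPR) :
    TPR = stdGaussianCDF (a +
      |∑ j, x j * (x j - mx j)| / (Real.sqrt S * s * Real.sqrt (∑ j, x j ^ 2))) :=
  stmt_6_general x mx S hS s hs hx hip μ δ σ hδ hσ τ FPR TPR hpos hneg a ha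
end

section
/- Fix γ₀ ∈ ℝ and r ≥ 0, and for S > 0 define TPR(S) = Φ(γ₀ + r/√S) and FPR = Φ(γ₀). Then √S·(TPR(S) − FPR) tends to (r/√(2π))·e^{−γ₀²/2} as S → ∞. Consequently, if r > 0, then log(TPR(S) − FPR) + (1/2)·log S tends to −γ₀²/2 + log(r/√(2π)) as S → ∞. -/
open MeasureTheory ProbabilityTheory Filter

lemma stdGaussianCDF_eq (x : ℝ) :
    stdGaussianCDF x = ∫ t in Set.Iic x, gaussianPDFReal 0 1 t := by
  rw [stdGaussianCDF, gaussianReal_apply_eq_integral _ one_ne_zero,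
    ENNReal.toReal_ofReal]
  exact integral_nonneg fun t => gaussianPDFReal_nonneg 0 1 t

lemma stdGaussianCDF_hasDerivAt (x : ℝ) :
    HasDerivAt stdGaussianCDF (gaussianPDFReal 0 1 x) x := by
  have hcont : Continuous (gaussianPDFReal 0 1) := by
    rw [gaussianPDFReal_def]; fun_prop
  have h := (hcont.integral_hasStrictDerivAt 0 x).hasDerivAt
  have heq : ∀ y, stdGaussianCDF y = stdGaussianCDF 0 + ∫ t in (0:ℝ)..y, gaussianPDFReal 0 1 t := by
    intro y
    have hint := (integrable_gaussianPDFReal 0 1)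
    rw [stdGaussianCDF_eq, stdGaussianCDF_eq,
      ← intervalIntegral.integral_Iic_sub_Iic hint.integrableOn hint.integrableOn]
    ring
  exact (h.const_add _).congr_of_eventuallyEq (Eventually.of_forall fun y => heq y)

lemma gaussianPDFReal_zero_one (x : ℝ) :
    gaussianPDFReal 0 1 x = (Real.sqrt (2 * Real.pi))⁻¹ * Real.exp (-x ^ 2 / 2) := by
  simp [gaussianPDFReal, neg_div]

/-- Large-`S` asymptotic of Theorem 1: with `TPR(S) = Φ(γ₀ + r/√S)` and `FPR = Φ(γ₀)`,
`√S·(TPR(S) − FPR) → (r/√(2π))·e^{−γ₀²/2}`, and consequently for `r > 0`,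
`log(TPR(S) − FPR) + (1/2)·log S → −γ₀²/2 + log(r/√(2π))`. -/
theorem stmt_7 (γ₀ r : ℝ) (hr : 0 ≤ r) :
    Filter.Tendsto
      (fun S : ℝ =>
        Real.sqrt S * (stdGaussianCDF (γ₀ + r / Real.sqrt S) - stdGaussianCDF γ₀))
      Filter.atTop
      (nhds (r / Real.sqrt (2 * Real.pi) * Real.exp (-γ₀ ^ 2 / 2))) ∧
    (0 < r →
      Filter.Tendsto
        (fun S : ℝ =>
          Real.log (stdGaussianCDF (γ₀ + r / Real.sqrt S) - stdGaussianCDF γ₀) +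
            (1 / 2) * Real.log S)
        Filter.atTop
        (nhds (-γ₀ ^ 2 / 2 + Real.log (r / Real.sqrt (2 * Real.pi))))) := by
  have hfirst : Filter.Tendsto
      (fun S : ℝ =>
        Real.sqrt S * (stdGaussianCDF (γ₀ + r / Real.sqrt S) - stdGaussianCDF γ₀))
      Filter.atTop
      (nhds (r / Real.sqrt (2 * Real.pi) * Real.exp (-γ₀ ^ 2 / 2))) := by
    rcases hr.eq_or_lt with hr0 | hrpos
    · subst hr0
      simp only [zero_div, add_zero, sub_self, mul_zero, zero_mul]
      exact tendsto_const_nhds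
    · have hderiv := stdGaussianCDF_hasDerivAt γ₀
      have hs := hasDerivAt_iff_tendsto_slope.mp hderiv
      have htend : Tendsto (fun S : ℝ => γ₀ + r / Real.sqrt S) atTop (nhdsWithin γ₀ {γ₀}ᶜ) := by
        refine tendsto_nhdsWithin_of_tendsto_nhds_of_eventually_within _ ?_ ?_
        · have hsqrt : Tendsto Real.sqrt atTop atTop := by
            refine Filter.tendsto_atTop_atTop.mpr fun b => ⟨b ^ 2 + 1, fun a ha => ?_⟩
            calc b ≤ |b| := le_abs_self b
              _ = Real.sqrt (b ^ 2) := (Real.sqrt_sq_eq_abs b).symm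
              _ ≤ Real.sqrt a := Real.sqrt_le_sqrt (by linarith)
          have : Tendsto (fun S : ℝ => r / Real.sqrt S) atTop (nhds 0) :=
            Filter.Tendsto.div_atTop (tendsto_const_nhds) hsqrt
          simpa using (tendsto_const_nhds : Tendsto (fun _ : ℝ => γ₀) atTop (nhds γ₀)).add this
        · filter_upwards [eventually_gt_atTop (0:ℝ)] with S hS
          have h1 : 0 < r / Real.sqrt S := div_pos hrpos (Real.sqrt_pos.mpr hS)
          simp only [Set.mem_compl_iff, Set.mem_singleton_iff]
          intro h; nlinarith
      have hcomp := ((hs.comp htend).const_mul r)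
      have hval : r * gaussianPDFReal 0 1 γ₀ =
          r / Real.sqrt (2 * Real.pi) * Real.exp (-γ₀ ^ 2 / 2) := by
        rw [gaussianPDFReal_zero_one]; ring
      rw [hval] at hcomp
      refine hcomp.congr' ?_
      filter_upwards [eventually_gt_atTop (0:ℝ)] with S hS
      have hsS : 0 < Real.sqrt S := Real.sqrt_pos.mpr hS
      simp only [Function.comp_apply, slope_def_field]
      rw [show γ₀ + r / Real.sqrt S - γ₀ = r / Real.sqrt S from by ring]
      generalize stdGaussianCDF (γ₀ + r / Real.sqrt S) - stdGaussianCDF γ₀ = d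
      field_simp
  refine ⟨hfirst, fun hrpos => ?_⟩
  set L := r / Real.sqrt (2 * Real.pi) * Real.exp (-γ₀ ^ 2 / 2) with hL
  have hLpos : 0 < L :=
    mul_pos (div_pos hrpos (Real.sqrt_pos.mpr (by positivity))) (Real.exp_pos _)
  have hlog := ((Real.continuousAt_log hLpos.ne').tendsto).comp hfirst
  have hlogL : Real.log L = -γ₀ ^ 2 / 2 + Real.log (r / Real.sqrt (2 * Real.pi)) := by
    rw [hL, Real.log_mul (by positivity) (Real.exp_ne_zero _), Real.log_exp]
    ring
  rw [hlogL] at hlog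
  refine hlog.congr' ?_
  filter_upwards [eventually_gt_atTop (0:ℝ),
    hfirst.eventually (eventually_gt_nhds hLpos)] with S hS hpos
  have hsS : 0 < Real.sqrt S := Real.sqrt_pos.mpr hS
  have hd : 0 < stdGaussianCDF (γ₀ + r / Real.sqrt S) - stdGaussianCDF γ₀ := by
    nlinarith [Real.sqrt_nonneg S]
  simp only [Function.comp_apply]
  rw [Real.log_mul hsS.ne' hd.ne', Real.log_sqrt hS.le]
  ring
end

section
/- Let t be a real random variable on a probability space, let (Z, μ_Z) be a probability space, and let A, B : Z → ℝ be integrable with a := ∫|A| dμ_Z > 0 and b := ∫|B| dμ_Z. Then for every c > 0 and β > 0, P( μ_Z({z : A(z)·t + B(z) ≥ c}) ≥ β ) ≤ P( |t| ≥ (β·c − b)/a ). In particular, if the CDF F of |t| is continuous, the right-hand side equals 1 − F((β·c − b)/a). -/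
/-!
Fix `t`. Markov's inequality bounds `c · μ_Z{A t + B ≥ c}` by `∫ |A t + B|`, which the triangle
inequality bounds by `|t| a + b`; so whenever the inner probability is at least `β`, we get
`β c ≤ |t| a + b`, i.e. `|t| ≥ (β c − b) / a`. For the second claim, `F` is the distribution
function of the law of `|t|`, and continuity of `F` means that this law has no atom at the
threshold, so `P(|t| ≥ v) = 1 − P(|t| ≤ v)`.
-/

open MeasureTheory ProbabilityTheory Filter Set

section Markov

variable {Z : Type*} [MeasurableSpace Z] {μ : Measure Z}

lemma mul_measureReal_le_integral_abs [IsFiniteMeasure μ] {f : Z → ℝ} (hf : Integrable f μ)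
    {c : ℝ} (hc : 0 ≤ c) : c * μ.real {z | c ≤ f z} ≤ ∫ z, |f z| ∂μ :=
  calc c * μ.real {z | c ≤ f z}
      ≤ c * μ.real {z | c ≤ |f z|} :=
        mul_le_mul_of_nonneg_left
          (measureReal_mono fun z (hz : c ≤ f z) => hz.trans (le_abs_self _)) hc
    _ ≤ ∫ z, |f z| ∂μ :=
        mul_meas_ge_le_integral_of_nonneg (ae_of_all _ fun _ => abs_nonneg _) hf.abs c

lemma integral_abs_mul_const_add_le {A B : Z → ℝ} (hA : Integrable A μ) (hB : Integrable B μ)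
    (T : ℝ) : ∫ z, |A z * T + B z| ∂μ ≤ |T| * ∫ z, |A z| ∂μ + ∫ z, |B z| ∂μ := by
  have hbound : ∀ z, |A z * T + B z| ≤ |T| * |A z| + |B z| := fun z =>
    (abs_add_le _ _).trans_eq (by rw [abs_mul, mul_comm])
  calc ∫ z, |A z * T + B z| ∂μ
      ≤ ∫ z, (|T| * |A z| + |B z|) ∂μ :=
        integral_mono ((hA.mul_const T).add hB).abs ((hA.abs.const_mul _).add hB.abs) hbound
    _ = |T| * ∫ z, |A z| ∂μ + ∫ z, |B z| ∂μ := by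
        rw [integral_add (hA.abs.const_mul _) hB.abs, integral_const_mul]

lemma mul_measureReal_mul_const_add_ge_le [IsFiniteMeasure μ] {A B : Z → ℝ}
    (hA : Integrable A μ) (hB : Integrable B μ) (T : ℝ) {c : ℝ} (hc : 0 ≤ c) :
    c * μ.real {z | c ≤ A z * T + B z} ≤ |T| * ∫ z, |A z| ∂μ + ∫ z, |B z| ∂μ :=
  (mul_measureReal_le_integral_abs ((hA.mul_const T).add hB) hc).trans
    (integral_abs_mul_const_add_le hA hB T)

end Markov

lemma measureReal_ge_eq_one_sub_of_continuousAt {Ω : Type*} [MeasurableSpace Ω]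
    {P : Measure Ω} [IsProbabilityMeasure P] {X : Ω → ℝ} (hX : Measurable X) {x : ℝ}
    (hcont : ContinuousAt (fun y => P.real {ω | X ω ≤ y}) x) :
    P.real {ω | x ≤ X ω} = 1 - P.real {ω | X ω ≤ x} := by
  set ν := P.map X
  have : IsProbabilityMeasure ν := Measure.isProbabilityMeasure_map hX.aemeasurable
  have hcdf : ⇑(cdf ν) = fun y => P.real {ω | X ω ≤ y} := by
    funext y
    rw [cdf_eq_real, map_measureReal_apply hX measurableSet_Iic]
    rfl
  have hleftLim : Function.leftLim (cdf ν) x = cdf ν x := by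
    rw [← hcdf] at hcont
    exact hcont.continuousWithinAt.leftLim_eq
  have hIci : ν (Ici x) = ENNReal.ofReal (1 - cdf ν x) := by
    have h := (cdf ν).measure_Ici (tendsto_cdf_atTop ν) x
    rwa [measure_cdf, hleftLim] at h
  calc P.real {ω | x ≤ X ω}
      = ν.real (Ici x) := (map_measureReal_apply hX measurableSet_Ici).symm
    _ = 1 - cdf ν x := by
        rw [measureReal_def, hIci, ENNReal.toReal_ofReal (sub_nonneg.mpr (cdf_le_one ν x))]
    _ = 1 - P.real {ω | X ω ≤ x} := by rw [hcdf]

theorem stmt_10_general {Ω Z : Type*} [MeasurableSpace Ω] [MeasurableSpace Z]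
    (P : Measure Ω) [IsProbabilityMeasure P] (μZ : Measure Z) [IsProbabilityMeasure μZ]
    (t : Ω → ℝ) (ht : Measurable t)
    (A B : Z → ℝ) (hA : Integrable A μZ) (hB : Integrable B μZ)
    (a b : ℝ) (ha : a = ∫ z, |A z| ∂μZ) (hb : b = ∫ z, |B z| ∂μZ) (hapos : 0 < a)
    (c β : ℝ) (hc : 0 < c) :
    P {ω | (μZ {z | A z * t ω + B z ≥ c}).toReal ≥ β} ≤
        P {ω | |t ω| ≥ (β * c - b) / a} ∧
      ∀ F : ℝ → ℝ, (∀ v, F v = (P {ω | |t ω| ≤ v}).toReal) → Continuous F →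
        (P {ω | |t ω| ≥ (β * c - b) / a}).toReal = 1 - F ((β * c - b) / a) := by
  constructor
  · refine measure_mono fun ω (hω : β ≤ μZ.real {z | c ≤ A z * t ω + B z}) => ?_
    have hmarkov := mul_measureReal_mul_const_add_ge_le hA hB (t ω) hc.le
    rw [← ha, ← hb] at hmarkov
    have hβc : β * c ≤ |t ω| * a + b := by nlinarith
    show (β * c - b) / a ≤ |t ω|
    rw [div_le_iff₀ hapos]
    linarith
  · intro F hF hFcont
    have hFeq : F = fun v => P.real {ω | |t ω| ≤ v} := funext hF
    subst hFeq
    exact measureReal_ge_eq_one_sub_of_continuousAt ht.abs hFcont.continuousAt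

/-- False-positive-rate bound in the proof of Lemma 2: with `a = ∫|A| > 0`, `b = ∫|B|`,
`P(μ_Z({z : A(z)·t + B(z) ≥ c}) ≥ β) ≤ P(|t| ≥ (β·c − b)/a)`, and if the CDF `F` of `|t|`
is continuous then the right-hand side equals `1 − F((β·c − b)/a)`. -/
theorem stmt_10 {Ω Z : Type*} [MeasurableSpace Ω] [MeasurableSpace Z]
    (P : Measure Ω) [IsProbabilityMeasure P] (μZ : Measure Z) [IsProbabilityMeasure μZ]
    (t : Ω → ℝ) (ht : Measurable t)
    (A B : Z → ℝ) (hA : Integrable A μZ) (hB : Integrable B μZ)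
    (a b : ℝ) (ha : a = ∫ z, |A z| ∂μZ) (hb : b = ∫ z, |B z| ∂μZ) (hapos : 0 < a)
    (c β : ℝ) (hc : 0 < c) (hβ : 0 < β) :
    P {ω | (μZ {z | A z * t ω + B z ≥ c}).toReal ≥ β} ≤
        P {ω | |t ω| ≥ (β * c - b) / a} ∧
      ∀ F : ℝ → ℝ, (∀ v, F v = (P {ω | |t ω| ≤ v}).toReal) → Continuous F →
        (P {ω | |t ω| ≥ (β * c - b) / a}).toReal = 1 - F ((β * c - b) / a) :=
  stmt_10_general P μZ t ht A B hA hB a b ha hb hapos c β hc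
end

section
/- Let F(v) = 2Φ(v) − 1 for v ≥ 0 and F(v) = 0 for v < 0 denote the CDF of the absolute value of a standard normal random variable. Let (Ω, P) be a probability space, ψ : Ω → [0,∞) integrable, and fix u > 0 and α = 1 − F(u). Suppose for each S > 0 a measurable function TPR_S : Ω → ℝ satisfies TPR_S(ω) ≤ 1 − F(u − ψ(ω)/√S) for all ω. Then limsup_{S→∞} √S·( ∫_Ω TPR_S dP − α ) ≤ √(2/π)·e^{−u²/2}·∫_Ω ψ dP. -/
open MeasureTheory ProbabilityTheory

/-- CDF of the absolute value of a standard normal random variable: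
`F(v) = 2Φ(v) − 1` for `v ≥ 0` and `F(v) = 0` for `v < 0`. -/
noncomputable def foldedStdGaussianCDF (v : ℝ) : ℝ :=
  if 0 ≤ v then 2 * stdGaussianCDF v - 1 else 0

open Real Filter Topology Set

/-!
The folded normal density `f(v) = √(2/π) e^{-v²/2}` is decreasing on `[0, ∞)`, so
`F(u) - F(u - t) ≤ t · f(max (u - t) 0)` for `t ≥ 0`. Hence `√S · (TPR_S - α)` is bounded by
`ψ · f(max (u - ψ/√S) 0)`, which is dominated by `√(2/π) · ψ` and tends pointwise to `f(u) · ψ`;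
dominated convergence then bounds the `limsup` by `f(u) · ∫ ψ`.
-/

lemma stdGaussianCDF_eq_integral (x : ℝ) :
    stdGaussianCDF x = ∫ t in Iic x, gaussianPDFReal 0 1 t := by
  rw [stdGaussianCDF, gaussianReal_apply_eq_integral _ one_ne_zero,
    ENNReal.toReal_ofReal (setIntegral_nonneg measurableSet_Iic
      (fun t _ => gaussianPDFReal_nonneg 0 1 t))]

lemma stdGaussianCDF_sub_eq_integral {a b : ℝ} (hab : a ≤ b) :
    stdGaussianCDF b - stdGaussianCDF a = ∫ t in Ioc a b, gaussianPDFReal 0 1 t := by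
  have hint := (integrable_gaussianPDFReal 0 1).integrableOn (s := Iic a)
  rw [stdGaussianCDF_eq_integral, stdGaussianCDF_eq_integral, ← Iic_union_Ioc_eq_Iic hab,
    setIntegral_union (Iic_disjoint_Ioc le_rfl) measurableSet_Ioc hint
      (integrable_gaussianPDFReal 0 1).integrableOn, add_sub_cancel_left]

lemma stdGaussianCDF_zero : stdGaussianCDF 0 = 1 / 2 := by
  have hint := integrable_gaussianPDFReal 0 1
  have hsymm : ∫ t in Iic (0 : ℝ), gaussianPDFReal 0 1 t
      = ∫ t in Ioi (0 : ℝ), gaussianPDFReal 0 1 t := by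
    simpa [gaussianPDFReal, neg_sq] using integral_comp_neg_Iic (0 : ℝ) (gaussianPDFReal 0 1)
  have htotal : (∫ t in Iic (0 : ℝ), gaussianPDFReal 0 1 t)
      + ∫ t in Ioi (0 : ℝ), gaussianPDFReal 0 1 t = 1 := by
    rw [← setIntegral_union (Iic_disjoint_Ioi le_rfl) measurableSet_Ioi hint.integrableOn
      hint.integrableOn, Iic_union_Ioi, setIntegral_univ,
      integral_gaussianPDFReal_eq_one 0 one_ne_zero]
  rw [stdGaussianCDF_eq_integral]
  linarith

lemma gaussianPDFReal_zero_one_le {s t : ℝ} (hs : 0 ≤ s) (hst : s ≤ t) :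
    gaussianPDFReal 0 1 t ≤ gaussianPDFReal 0 1 s := by
  simp only [gaussianPDFReal, NNReal.coe_one, mul_one, sub_zero]
  gcongr

lemma stdGaussianCDF_sub_le {a b : ℝ} (ha : 0 ≤ a) (hab : a ≤ b) :
    stdGaussianCDF b - stdGaussianCDF a ≤ (b - a) * gaussianPDFReal 0 1 a := by
  rw [stdGaussianCDF_sub_eq_integral hab]
  calc ∫ t in Ioc a b, gaussianPDFReal 0 1 t
      ≤ ∫ _ in Ioc a b, gaussianPDFReal 0 1 a :=
        setIntegral_mono_on (integrable_gaussianPDFReal 0 1).integrableOn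
          (integrableOn_const measure_Ioc_lt_top.ne enorm_ne_top) measurableSet_Ioc
          fun t ht => gaussianPDFReal_zero_one_le ha ht.1.le
    _ = (b - a) * gaussianPDFReal 0 1 a := by
        simp [Real.volume_real_Ioc_of_le hab]

/-- The density of `|Z|` for a standard normal `Z`, written without the indicator of `[0, ∞)`. -/
noncomputable def foldedStdGaussianPDF (v : ℝ) : ℝ :=
  √(2 / π) * exp (-v ^ 2 / 2)

lemma foldedStdGaussianPDF_eq_two_mul (v : ℝ) :
    foldedStdGaussianPDF v = 2 * gaussianPDFReal 0 1 v := by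
  have h2π : √(2 * π) ≠ 0 := by positivity
  have hconst : √(2 / π) = 2 * (√(2 * π))⁻¹ := by
    rw [eq_mul_inv_iff_mul_eq₀ h2π, ← sqrt_mul (by positivity),
      show 2 / π * (2 * π) = 2 ^ 2 by field_simp, sqrt_sq zero_le_two]
  simp only [foldedStdGaussianPDF, gaussianPDFReal, NNReal.coe_one, mul_one, sub_zero, hconst]
  ring

lemma foldedStdGaussianPDF_nonneg (v : ℝ) : 0 ≤ foldedStdGaussianPDF v := by
  unfold foldedStdGaussianPDF; positivity

lemma foldedStdGaussianPDF_le (v : ℝ) : foldedStdGaussianPDF v ≤ √(2 / π) := by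
  unfold foldedStdGaussianPDF
  exact mul_le_of_le_one_right (sqrt_nonneg _) (exp_le_one_iff.2 (by nlinarith [sq_nonneg v]))

lemma continuous_foldedStdGaussianPDF : Continuous foldedStdGaussianPDF := by
  unfold foldedStdGaussianPDF; fun_prop

/-- On `[a, b]` the folded density is at most its value at `max a 0`. -/
lemma foldedStdGaussianCDF_sub_le {a b : ℝ} (hab : a ≤ b) :
    foldedStdGaussianCDF b - foldedStdGaussianCDF a
      ≤ (b - a) * foldedStdGaussianPDF (max a 0) := by
  have hpdf := foldedStdGaussianPDF_nonneg (max a 0)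
  rcases le_or_gt 0 a with ha | ha
  · have h := stdGaussianCDF_sub_le ha hab
    rw [foldedStdGaussianCDF, foldedStdGaussianCDF, if_pos (ha.trans hab), if_pos ha,
      max_eq_left ha, foldedStdGaussianPDF_eq_two_mul]
    linarith
  rcases le_or_gt 0 b with hb | hb
  · have h := stdGaussianCDF_sub_le le_rfl hb
    have hpdf0 := gaussianPDFReal_nonneg 0 1 0
    rw [stdGaussianCDF_zero, sub_zero] at h
    rw [foldedStdGaussianCDF, foldedStdGaussianCDF, if_pos hb, if_neg ha.not_ge,
      max_eq_right ha.le, foldedStdGaussianPDF_eq_two_mul]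
    nlinarith
  · rw [foldedStdGaussianCDF, foldedStdGaussianCDF, if_neg hb.not_ge, if_neg ha.not_ge, sub_zero]
    exact mul_nonneg (by linarith) hpdf

/-- `0 ≤ c` is needed because the real `limsup` of a sequence that is not cobounded is the junk
value `0`. -/
lemma limsup_le_of_eventually_le_of_tendsto {α : Type*} {l : Filter α} [l.NeBot]
    {g h : α → ℝ} {c : ℝ} (hgh : g ≤ᶠ[l] h) (hh : Tendsto h l (𝓝 c)) (hc : 0 ≤ c) :
    limsup g l ≤ c := by
  by_cases hg : IsCoboundedUnder (· ≤ ·) l g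
  · exact (limsup_le_limsup hgh hg hh.isBoundedUnder_le).trans_eq hh.limsup_eq
  · rwa [Real.limsup_of_not_isCoboundedUnder hg]

section

variable {Ω : Type*} [MeasurableSpace Ω] {P : Measure Ω} {ψ : Ω → ℝ} {g : ℝ → ℝ} {C : ℝ}

lemma integrable_mul_comp_sub_div (hψ : Integrable ψ P) (hg : Continuous g)
    (hgC : ∀ x, |g x| ≤ C) (u s : ℝ) :
    Integrable (fun ω => ψ ω * g (u - ψ ω / s)) P :=
  hψ.mul_bdd (hg.comp_aestronglyMeasurable
      (aestronglyMeasurable_const.sub (hψ.div_const s).aestronglyMeasurable))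
    (ae_of_all _ fun _ => hgC _)

lemma tendsto_integral_mul_comp_sub_div_sqrt (hψ : Integrable ψ P) (hg : Continuous g)
    (hgC : ∀ x, |g x| ≤ C) (u : ℝ) :
    Tendsto (fun S => ∫ ω, ψ ω * g (u - ψ ω / √S) ∂P) atTop (𝓝 ((∫ ω, ψ ω ∂P) * g u)) := by
  rw [← integral_mul_const]
  refine tendsto_integral_filter_of_dominated_convergence (fun ω => |ψ ω| * C)
    (Eventually.of_forall fun S => (integrable_mul_comp_sub_div hψ hg hgC u √S).1)
    (Eventually.of_forall fun S => ae_of_all _ fun ω => ?_) (hψ.abs.mul_const C)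
    (ae_of_all _ fun ω => ?_)
  · rw [norm_mul, Real.norm_eq_abs, Real.norm_eq_abs]
    exact mul_le_mul_of_nonneg_left (hgC _) (abs_nonneg _)
  · have h : Tendsto (fun S => u - ψ ω / √S) atTop (𝓝 (u - 0)) :=
      tendsto_const_nhds.sub (tendsto_const_nhds.div_atTop tendsto_sqrt_atTop)
    rw [sub_zero] at h
    exact tendsto_const_nhds.mul (hg.continuousAt.tendsto.comp h)

end

theorem stmt_14_general {Ω : Type*} [MeasurableSpace Ω] (P : Measure Ω) [IsProbabilityMeasure P]
    (ψ : Ω → ℝ) (hψ : ∀ ω, 0 ≤ ψ ω) (hint : Integrable ψ P)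
    (u α : ℝ) (hu : 0 < u) (hα : α = 1 - foldedStdGaussianCDF u)
    (TPR : ℝ → Ω → ℝ)
    (hTPRint : ∀ S, Integrable (TPR S) P)
    (hbound : ∀ S > (0 : ℝ), ∀ ω, TPR S ω ≤ 1 - foldedStdGaussianCDF (u - ψ ω / Real.sqrt S)) :
    Filter.limsup (fun S : ℝ => Real.sqrt S * ((∫ ω, TPR S ω ∂P) - α)) Filter.atTop ≤
      Real.sqrt (2 / Real.pi) * Real.exp (-u ^ 2 / 2) * ∫ ω, ψ ω ∂P := by
  set g : ℝ → ℝ := fun v => foldedStdGaussianPDF (max v 0)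
  have hg : Continuous g := continuous_foldedStdGaussianPDF.comp (by fun_prop)
  have hgC : ∀ v, |g v| ≤ √(2 / π) := fun v => by
    rw [abs_of_nonneg (foldedStdGaussianPDF_nonneg _)]
    exact foldedStdGaussianPDF_le _
  have hpoint : ∀ S > (0 : ℝ), ∀ ω, √S * (TPR S ω - α) ≤ ψ ω * g (u - ψ ω / √S) := by
    intro S hS ω
    have hsqrt : 0 < √S := sqrt_pos.2 hS
    have hF := foldedStdGaussianCDF_sub_le (sub_le_self u (div_nonneg (hψ ω) hsqrt.le))
    rw [sub_sub_cancel] at hF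
    calc √S * (TPR S ω - α) ≤ √S * (ψ ω / √S * g (u - ψ ω / √S)) := by
          gcongr; linarith [hbound S hS ω]
      _ = ψ ω * g (u - ψ ω / √S) := by field_simp
  have hev : ∀ᶠ S in atTop,
      √S * ((∫ ω, TPR S ω ∂P) - α) ≤ ∫ ω, ψ ω * g (u - ψ ω / √S) ∂P := by
    filter_upwards [eventually_gt_atTop 0] with S hS
    have hint' := ((hTPRint S).sub (integrable_const α)).const_mul √S
    calc √S * ((∫ ω, TPR S ω ∂P) - α) = ∫ ω, √S * (TPR S ω - α) ∂P := by
          simp [integral_const_mul, integral_sub (hTPRint S) (integrable_const α)]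
      _ ≤ _ := integral_mono hint' (integrable_mul_comp_sub_div hint hg hgC u √S) (hpoint S hS)
  refine limsup_le_of_eventually_le_of_tendsto hev ?_
    (mul_nonneg (by positivity) (integral_nonneg hψ))
  have hlim := tendsto_integral_mul_comp_sub_div_sqrt hint hg hgC u
  rwa [mul_comm, show g u = foldedStdGaussianPDF u by simp [g, hu.le]] at hlim

/-- Corollary 2 (average-case RMIA power-law), precise form: if for each `S > 0` the
measurable function `TPR_S` satisfies `TPR_S(ω) ≤ 1 − F(u − ψ(ω)/√S)` with `ψ ≥ 0`
integrable, `u > 0` and `α = 1 − F(u)`, then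
`limsup_{S→∞} √S·(∫ TPR_S dP − α) ≤ √(2/π)·e^{−u²/2}·∫ ψ dP`. -/
theorem stmt_14 {Ω : Type*} [MeasurableSpace Ω] (P : Measure Ω) [IsProbabilityMeasure P]
    (ψ : Ω → ℝ) (hψ : ∀ ω, 0 ≤ ψ ω) (hint : Integrable ψ P)
    (u α : ℝ) (hu : 0 < u) (hα : α = 1 - foldedStdGaussianCDF u)
    (TPR : ℝ → Ω → ℝ)
    (hmeas : ∀ S, Measurable (TPR S))
    (hTPRint : ∀ S, Integrable (TPR S) P)
    (hbound : ∀ S > (0 : ℝ), ∀ ω, TPR S ω ≤ 1 - foldedStdGaussianCDF (u - ψ ω / Real.sqrt S)) :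
    Filter.limsup (fun S : ℝ => Real.sqrt S * ((∫ ω, TPR S ω ∂P) - α)) Filter.atTop ≤
      Real.sqrt (2 / Real.pi) * Real.exp (-u ^ 2 / 2) * ∫ ω, ψ ω ∂P :=
  stmt_14_general P ψ hψ hint u α hu hα TPR hTPRint hbound
end
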